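/- For every p ∈ ℝ^{nm} with 0 ≤ p ≤ 1 entrywise, the matrix I + A(diag(p) + (I − diag(p))M) is invertible and H(p) ≤ 1 entrywise. -/

import Mathlib

open Matrix BigOperators Finset

/-- Spectral abscissa of a real square matrix: the maximum of the real parts of its
(complex) eigenvalues. -/
noncomputable def specAbscissa {k : Type*} [Fintype k] [DecidableEq k]
    (M : Matrix k k ℝ) : ℝ :=
  sSup {r : ℝ | ∃ z ∈ spectrum ℂ (M.map Complex.ofReal), z.re = r}

/-- Diagonal `nm × nm` matrix (indexed by pairs `(α, i)`) built from rates `c^α_i`. -/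
noncomputable def pairDiag {n m : ℕ} (c : Fin m → Fin n → ℝ) :
    Matrix (Fin m × Fin n) (Fin m × Fin n) ℝ :=
  Matrix.diagonal fun q => c q.1 q.2

/-- The equilibrium dispersal Laplacian `L*`: block-diagonal, whose `α`-th `n × n` block
has `(i,i)` entry `ν^α_i = ∑_{j ≠ i} q^α_{ij}` and `(i,j)` entry `-q^α_{ji} π^α_j / π^α_i`
for `j ≠ i`. -/
noncomputable def Lstar {n m : ℕ} (Q : Fin m → Matrix (Fin n) (Fin n) ℝ)
    (piv : Fin m → Fin n → ℝ) : Matrix (Fin m × Fin n) (Fin m × Fin n) ℝ :=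
  Matrix.of fun q q' =>
    if q.1 = q'.1 then
      (if q.2 = q'.2 then ∑ j ∈ Finset.univ \ {q.2}, Q q.1 q.2 j
       else -(Q q.1 q'.2 q.2 * piv q.1 q'.2 / piv q.1 q.2))
    else 0

/-- The equilibrium population-fraction matrix `F*`: the `(α,σ)` block is the diagonal
matrix with entries `f^{*σ}_i = N^σ π^σ_i / ∑_τ N^τ π^τ_i` (the same row of blocks
repeated for every `α`). -/
noncomputable def Fstar {n m : ℕ} (N : Fin m → ℝ) (piv : Fin m → Fin n → ℝ) :
    Matrix (Fin m × Fin n) (Fin m × Fin n) ℝ :=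
  Matrix.of fun q q' =>
    if q.2 = q'.2 then N q'.1 * piv q'.1 q.2 / ∑ τ, N τ * piv τ q.2 else 0

/-- The matrix `A = (L* + D)⁻¹ B`. -/
noncomputable def Amat {n m : ℕ} (Q : Fin m → Matrix (Fin n) (Fin n) ℝ)
    (piv : Fin m → Fin n → ℝ) (β δ : Fin m → Fin n → ℝ) :
    Matrix (Fin m × Fin n) (Fin m × Fin n) ℝ :=
  (Lstar Q piv + pairDiag δ)⁻¹ * pairDiag β

/-- The fixed-point map `H(p) = (I + A(diag(p) + (I − diag(p)) M))⁻¹ A p`. -/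
noncomputable def Hmap {n m : ℕ} (A Mlap : Matrix (Fin m × Fin n) (Fin m × Fin n) ℝ)
    (p : Fin m × Fin n → ℝ) : Fin m × Fin n → ℝ :=
  ((1 + A * (Matrix.diagonal p + (1 - Matrix.diagonal p) * Mlap))⁻¹).mulVec (A.mulVec p)

/-!
Write `K = L* + D`, so that `A = K⁻¹ B`, and `S = diag p + (I - diag p) M`; then
`K (I + A S) = K + B S`. Both `K` and `K + B S` are Z-matrices with nonnegative row sums
(`K 1 = δ`, `(K + B S) 1 = δ + β p`, since `L*` and `M` have zero row sums), and within each
layer irreducibility of `Q^α` links every row to a row with `δ > 0`. Such weakly chained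
diagonally dominant Z-matrices are nonsingular and inverse-nonnegative. Finally `S 1 = p`
gives `B p = (K + B S) 1 - K 1`, so `H(p) = (K + B S)⁻¹ B p = 1 - (K + B S)⁻¹ δ ≤ 1`.
-/

namespace Matrix

variable {ι : Type*}

def OffDiagAdj {R : Type*} [Zero R] (K : Matrix ι ι R) (a c : ι) : Prop :=
  a ≠ c ∧ K a c ≠ 0

def IsZMatrix (K : Matrix ι ι ℝ) : Prop :=
  ∀ i j, i ≠ j → K i j ≤ 0

theorem IsZMatrix.add {K P : Matrix ι ι ℝ} (hK : K.IsZMatrix) (hP : P.IsZMatrix) :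
    (K + P).IsZMatrix :=
  fun i j h => add_nonpos (hK i j h) (hP i j h)

theorem IsZMatrix.offDiagAdj_le_add {K P : Matrix ι ι ℝ} (hK : K.IsZMatrix) (hP : P.IsZMatrix) :
    K.OffDiagAdj ≤ (K + P).OffDiagAdj :=
  fun a c ⟨hac, hKac⟩ =>
    ⟨hac, (add_neg_of_neg_of_nonpos ((hK a c hac).lt_of_ne hKac) (hP a c hac)).ne⟩

theorem isZMatrix_diagonal [DecidableEq ι] (d : ι → ℝ) : (diagonal d).IsZMatrix :=
  fun _ _ h => (diagonal_apply_ne d h).le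

variable [Fintype ι]

theorem diagonal_mulVec_one [DecidableEq ι] (d : ι → ℝ) : diagonal d *ᵥ 1 = d := by
  ext i; simp [mulVec_diagonal]

/-- Weakly chained diagonally dominant Z-matrix (the row sums of a Z-matrix measure its diagonal
dominance). -/
structure IsWCDDZMatrix (K : Matrix ι ι ℝ) : Prop where
  isZMatrix : K.IsZMatrix
  mulVec_one_nonneg : 0 ≤ K *ᵥ 1
  exists_reaches_strict : ∀ i, ∃ k, Relation.ReflTransGen K.OffDiagAdj i k ∧ 0 < (K *ᵥ 1) k

namespace IsWCDDZMatrix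

variable {K : Matrix ι ι ℝ}

theorem nonneg_of_mulVec_nonneg (hK : K.IsWCDDZMatrix) {z : ι → ℝ} (hz : 0 ≤ K *ᵥ z) :
    0 ≤ z := by
  by_contra hneg
  obtain ⟨i, hi⟩ : ∃ i, z i < 0 := by simpa [Pi.le_def] using hneg
  obtain ⟨i₀, -, hmin⟩ := exists_min_image univ z ⟨i, mem_univ i⟩
  set μ := z i₀
  have hμ : μ < 0 := (hmin i (mem_univ i)).trans_lt hi
  -- Minimum principle: `(K z) a = ∑ j, K a j (z j - μ) + μ (K 1) a` with both terms `≤ 0`.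
  have hmin_row : ∀ a, z a = μ → (K *ᵥ 1) a = 0 ∧ ∀ c, K.OffDiagAdj a c → z c = μ := by
    intro a ha
    have hterm : ∀ j ∈ univ, K a j * (z j - μ) ≤ 0 := by
      intro j _
      rcases eq_or_ne a j with rfl | haj
      · simp [ha]
      · exact mul_nonpos_of_nonpos_of_nonneg (hK.isZMatrix a j haj)
          (sub_nonneg.2 (hmin j (mem_univ j)))
    have hsplit : (K *ᵥ z) a = ∑ j, K a j * (z j - μ) + μ * (K *ᵥ 1) a := by
      simp only [mulVec, dotProduct, mul_sub, sum_sub_distrib, Pi.one_apply, mul_one, ← sum_mul]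
      ring
    have hsum := sum_nonpos hterm
    have hμrow : μ * (K *ᵥ 1) a ≤ 0 :=
      mul_nonpos_of_nonpos_of_nonneg hμ.le (hK.mulVec_one_nonneg a)
    have hza := hz a
    rw [Pi.zero_apply, hsplit] at hza
    refine ⟨?_, fun c ⟨_, hKac⟩ => ?_⟩
    · exact (mul_eq_zero.1 (by linarith : μ * (K *ᵥ 1) a = 0)).resolve_left hμ.ne
    · have := (sum_eq_zero_iff_of_nonpos hterm).1 (by linarith) c (mem_univ c)
      linarith [(mul_eq_zero.1 this).resolve_left hKac]
  obtain ⟨k, hpath, hk⟩ := hK.exists_reaches_strict i₀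
  have hzk : z k = μ := by
    clear hk
    induction hpath with
    | refl => rfl
    | tail _ hedge ih => exact (hmin_row _ ih).2 _ hedge
  exact hk.ne' (hmin_row k hzk).1

theorem add {P : Matrix ι ι ℝ} (hK : K.IsWCDDZMatrix) (hP : P.IsZMatrix) (hProw : 0 ≤ P *ᵥ 1) :
    (K + P).IsWCDDZMatrix where
  isZMatrix := hK.isZMatrix.add hP
  mulVec_one_nonneg := by rw [add_mulVec]; exact add_nonneg hK.mulVec_one_nonneg hProw
  exists_reaches_strict i := by
    obtain ⟨k, hpath, hk⟩ := hK.exists_reaches_strict i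
    refine ⟨k, Relation.ReflTransGen.mono (hK.isZMatrix.offDiagAdj_le_add hP) _ _ hpath, ?_⟩
    rw [add_mulVec, Pi.add_apply]
    exact add_pos_of_pos_of_nonneg hk (hProw k)

variable [DecidableEq ι]

theorem isUnit (hK : K.IsWCDDZMatrix) : IsUnit K := by
  have hle : ∀ x y, K *ᵥ x = K *ᵥ y → y ≤ x := fun x y h =>
    sub_nonneg.1 (hK.nonneg_of_mulVec_nonneg (by rw [mulVec_sub, h, sub_self]))
  exact mulVec_injective_iff_isUnit.1 fun x y h => le_antisymm (hle y x h.symm) (hle x y h)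

theorem inv_mulVec_nonneg (hK : K.IsWCDDZMatrix) {v : ι → ℝ} (hv : 0 ≤ v) : 0 ≤ K⁻¹ *ᵥ v := by
  refine hK.nonneg_of_mulVec_nonneg ?_
  rwa [mulVec_mulVec, mul_nonsing_inv _ ((isUnit_iff_isUnit_det K).1 hK.isUnit), one_mulVec]

end IsWCDDZMatrix

theorem isWCDDZMatrix_add_diagonal [DecidableEq ι] {L : Matrix ι ι ℝ} {d : ι → ℝ}
    (hL : L.IsZMatrix) (hLrow : 0 ≤ L *ᵥ 1) (hd : 0 ≤ d)
    (hreach : ∀ i, ∃ k, Relation.ReflTransGen L.OffDiagAdj i k ∧ 0 < d k) :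
    (L + diagonal d).IsWCDDZMatrix where
  isZMatrix := hL.add (isZMatrix_diagonal d)
  mulVec_one_nonneg := by
    rw [add_mulVec, diagonal_mulVec_one]
    exact add_nonneg hLrow hd
  exists_reaches_strict i := by
    obtain ⟨k, hpath, hk⟩ := hreach i
    refine ⟨k, Relation.ReflTransGen.mono (hL.offDiagAdj_le_add (isZMatrix_diagonal d)) _ _ hpath,
      ?_⟩
    rw [add_mulVec, diagonal_mulVec_one, Pi.add_apply]
    exact add_pos_of_nonneg_of_pos (hLrow k) hk

section Inverse

variable {R : Type*} [CommRing R] [DecidableEq ι] {K B S : Matrix ι ι R}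

theorem one_add_inv_mul_mul_eq (hK : IsUnit K) : 1 + K⁻¹ * B * S = K⁻¹ * (K + B * S) := by
  rw [Matrix.mul_add, nonsing_inv_mul _ ((isUnit_iff_isUnit_det K).1 hK), Matrix.mul_assoc]

theorem isUnit_one_add_inv_mul_mul (hK : IsUnit K) (hKBS : IsUnit (K + B * S)) :
    IsUnit (1 + K⁻¹ * B * S) := by
  rw [one_add_inv_mul_mul_eq hK]
  exact (isUnit_nonsing_inv_iff.2 hK).mul hKBS

theorem inv_one_add_inv_mul_mul_mulVec (hK : IsUnit K) (hKBS : IsUnit (K + B * S)) {p : ι → R}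
    (hp : S *ᵥ 1 = p) :
    (1 + K⁻¹ * B * S)⁻¹ *ᵥ ((K⁻¹ * B) *ᵥ p) = 1 - (K + B * S)⁻¹ *ᵥ (K *ᵥ 1) := by
  have hKdet := (isUnit_iff_isUnit_det K).1 hK
  have hBp : B *ᵥ p = (K + B * S) *ᵥ 1 - K *ᵥ 1 := by
    rw [← hp, add_mulVec, mulVec_mulVec, add_sub_cancel_left]
  calc (1 + K⁻¹ * B * S)⁻¹ *ᵥ ((K⁻¹ * B) *ᵥ p) = (K + B * S)⁻¹ *ᵥ (B *ᵥ p) := by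
        rw [one_add_inv_mul_mul_eq hK, mul_inv_rev, nonsing_inv_nonsing_inv _ hKdet,
          mulVec_mulVec, Matrix.mul_assoc, ← Matrix.mul_assoc K, mul_nonsing_inv _ hKdet,
          Matrix.one_mul, mulVec_mulVec]
    _ = 1 - (K + B * S)⁻¹ *ᵥ (K *ᵥ 1) := by
        rw [hBp, mulVec_sub, mulVec_mulVec,
          nonsing_inv_mul _ ((isUnit_iff_isUnit_det _).1 hKBS), one_mulVec]

end Inverse

section RowMix

variable [DecidableEq ι]

def rowMix (p : ι → ℝ) (M : Matrix ι ι ℝ) : Matrix ι ι ℝ :=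
  diagonal p + (1 - diagonal p) * M

theorem rowMix_mulVec_one {p : ι → ℝ} {M : Matrix ι ι ℝ} (hM : M *ᵥ 1 = 0) :
    rowMix p M *ᵥ 1 = p := by
  rw [rowMix, add_mulVec, ← mulVec_mulVec, hM, mulVec_zero, add_zero, diagonal_mulVec_one]

theorem isZMatrix_rowMix {p : ι → ℝ} {M : Matrix ι ι ℝ} (hp : p ≤ 1) (hM : M.IsZMatrix) :
    (rowMix p M).IsZMatrix := by
  intro i j hij
  have hdiag : (1 - diagonal p : Matrix ι ι ℝ) = diagonal (1 - p) := by
    rw [← diagonal_one, diagonal_sub]; rfl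
  simp only [rowMix, hdiag, add_apply, diagonal_apply_ne _ hij, diagonal_mul, zero_add,
    Pi.sub_apply, Pi.one_apply]
  exact mul_nonpos_of_nonneg_of_nonpos (sub_nonneg.2 (hp i)) (hM i j hij)

omit [Fintype ι] in
theorem isZMatrix_one_sub {F : Matrix ι ι ℝ} (hF : ∀ i j, 0 ≤ F i j) : (1 - F).IsZMatrix :=
  fun i j hij => by simpa [one_apply_ne hij] using hF i j

theorem IsZMatrix.diagonal_mul {b : ι → ℝ} {S : Matrix ι ι ℝ} (hb : 0 ≤ b) (hS : S.IsZMatrix) :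
    (diagonal b * S).IsZMatrix :=
  fun i j hij => by simpa [diagonal_mul] using mul_nonpos_of_nonneg_of_nonpos (hb i) (hS i j hij)

end RowMix

end Matrix

section Lstar

variable {n m : ℕ} {Q : Fin m → Matrix (Fin n) (Fin n) ℝ} {piv : Fin m → Fin n → ℝ}

theorem isZMatrix_Lstar (hQoff : ∀ α i j, i ≠ j → 0 ≤ Q α i j) (hpivpos : ∀ α i, 0 < piv α i) :
    (Lstar Q piv).IsZMatrix := by
  rintro ⟨α, i⟩ ⟨α', j⟩ h
  simp only [Lstar, of_apply]
  split_ifs with hα hij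
  · exact absurd (Prod.ext hα hij) h
  · exact neg_nonpos.2 (div_nonneg (mul_nonneg (hQoff _ _ _ (Ne.symm hij))
      (hpivpos _ _).le) (hpivpos _ _).le)
  · exact le_rfl

theorem Lstar_mulVec_one (hQdiag : ∀ α i, Q α i i = -∑ j ∈ univ \ {i}, Q α i j)
    (hpiveig : ∀ α i, ∑ j, Q α j i * piv α j = 0) (hpivpos : ∀ α i, 0 < piv α i) :
    Lstar Q piv *ᵥ 1 = 0 := by
  ext ⟨α, i⟩
  have hrow : (Lstar Q piv *ᵥ 1) (α, i) = ∑ j, (if i = j then ∑ l ∈ univ \ {i}, Q α i l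
      else -(Q α j i * piv α j / piv α i)) := by
    simp [mulVec, dotProduct, Lstar, Fintype.sum_prod_type]
  have hcol := hpiveig α i
  rw [sum_eq_add_sum_sdiff_singleton_of_mem (mem_univ i), hQdiag] at hcol
  rw [hrow, sum_eq_add_sum_sdiff_singleton_of_mem (mem_univ i), if_pos rfl,
    sum_congr rfl fun j hj => if_neg (Ne.symm (by simpa using hj)), sum_neg_distrib, ← sum_div,
    Pi.zero_apply, ← sub_eq_add_neg, sub_eq_zero, eq_div_iff (hpivpos α i).ne']
  linarith

theorem Lstar_offDiagAdj_of_pos (hpivpos : ∀ α i, 0 < piv α i) {α : Fin m} {a c : Fin n}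
    (hac : a ≠ c) (hQ : 0 < Q α c a) : (Lstar Q piv).OffDiagAdj (α, a) (α, c) := by
  refine ⟨fun h => hac (congrArg Prod.snd h), ?_⟩
  simp only [Lstar, of_apply, if_neg hac]
  exact (neg_neg_of_pos (div_pos (mul_pos hQ (hpivpos α c)) (hpivpos α a))).ne

theorem Lstar_reflTransGen_of_reflTransGen (hpivpos : ∀ α i, 0 < piv α i) {α : Fin m}
    {i k : Fin n} (h : Relation.ReflTransGen (fun a b => 0 < Q α a b) k i) :
    Relation.ReflTransGen (Lstar Q piv).OffDiagAdj (α, i) (α, k) := by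
  refine Relation.ReflTransGen.lift' (fun j => (α, j)) (fun a c hQ => ?_) _ _ h.swap
  rcases eq_or_ne a c with rfl | hac
  · exact .refl
  · exact .single (Lstar_offDiagAdj_of_pos hpivpos hac hQ)

end Lstar

section Fstar

variable {n m : ℕ} {N : Fin m → ℝ} {piv : Fin m → Fin n → ℝ}

theorem Fstar_nonneg (hN : ∀ α, 0 < N α) (hpivpos : ∀ α i, 0 < piv α i)
    (q q' : Fin m × Fin n) : 0 ≤ Fstar N piv q q' := by
  simp only [Fstar, of_apply]
  split_ifs
  · exact div_nonneg (mul_pos (hN _) (hpivpos _ _)).le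
      (sum_nonneg fun τ _ => (mul_pos (hN τ) (hpivpos τ _)).le)
  · exact le_rfl

theorem Fstar_mulVec_one (hN : ∀ α, 0 < N α) (hpivpos : ∀ α i, 0 < piv α i) :
    Fstar N piv *ᵥ 1 = 1 := by
  ext ⟨α, i⟩
  have hpos : 0 < ∑ τ, N τ * piv τ i :=
    sum_pos (fun τ _ => mul_pos (hN τ) (hpivpos τ i)) ⟨α, mem_univ α⟩
  simp [mulVec, dotProduct, Fstar, Fintype.sum_prod_type, ← sum_div, hpos.ne']

end Fstar

theorem Hmap_le_one_general
    {n m : ℕ}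
    (Q : Fin m → Matrix (Fin n) (Fin n) ℝ)
    (hQoff : ∀ (α : Fin m) (i j : Fin n), i ≠ j → 0 ≤ Q α i j)
    (hQdiag : ∀ (α : Fin m) (i : Fin n), Q α i i = -∑ j ∈ Finset.univ \ {i}, Q α i j)
    (hQirr : ∀ (α : Fin m) (i j : Fin n),
      Relation.ReflTransGen (fun a b => 0 < Q α a b) i j)
    (piv : Fin m → Fin n → ℝ) (hpivpos : ∀ α i, 0 < piv α i)
    (hpiveig : ∀ (α : Fin m) (i : Fin n), ∑ j, Q α j i * piv α j = 0)
    (N : Fin m → ℝ) (hN : ∀ α, 0 < N α)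
    (β δ : Fin m → Fin n → ℝ)
    (hβ : ∀ α i, 0 < β α i) (hδ : ∀ α i, 0 ≤ δ α i)
    (hδpos : ∀ α, ∃ k, 0 < δ α k)
    (p : Fin m × Fin n → ℝ) (hp0 : ∀ q, 0 ≤ p q) (hp1 : ∀ q, p q ≤ 1) :
    IsUnit (1 + Amat Q piv β δ * (Matrix.diagonal p
        + (1 - Matrix.diagonal p) * (1 - Fstar N piv))) ∧
      (∀ q, Hmap (Amat Q piv β δ) (1 - Fstar N piv) p q ≤ 1) := by
  set K := Lstar Q piv + pairDiag δ
  set S := rowMix p (1 - Fstar N piv)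
  have hS : S *ᵥ 1 = p :=
    rowMix_mulVec_one (by rw [sub_mulVec, one_mulVec, Fstar_mulVec_one hN hpivpos, sub_self])
  have hK : K.IsWCDDZMatrix :=
    isWCDDZMatrix_add_diagonal (isZMatrix_Lstar hQoff hpivpos)
      (Lstar_mulVec_one hQdiag hpiveig hpivpos).ge (fun q => hδ q.1 q.2) fun ⟨α, i⟩ =>
        let ⟨k, hk⟩ := hδpos α
        ⟨(α, k), Lstar_reflTransGen_of_reflTransGen hpivpos (hQirr α k i), hk⟩
  have hKBS : (K + pairDiag β * S).IsWCDDZMatrix := by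
    have hSZ := isZMatrix_rowMix hp1 (isZMatrix_one_sub (Fstar_nonneg hN hpivpos))
    refine hK.add (hSZ.diagonal_mul fun q => (hβ q.1 q.2).le) ?_
    rw [← mulVec_mulVec, hS]
    exact fun q => by simpa [pairDiag, mulVec_diagonal] using mul_nonneg (hβ q.1 q.2).le (hp0 q)
  have hH : Hmap (Amat Q piv β δ) (1 - Fstar N piv) p =
      1 - (K + pairDiag β * S)⁻¹ *ᵥ (K *ᵥ 1) :=
    inv_one_add_inv_mul_mul_mulVec hK.isUnit hKBS.isUnit hS
  refine ⟨isUnit_one_add_inv_mul_mul hK.isUnit hKBS.isUnit, fun q => ?_⟩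
  rw [hH, Pi.sub_apply, Pi.one_apply, sub_le_self_iff]
  exact hKBS.inv_mulVec_nonneg hK.mulVec_one_nonneg q

/-- For every `p` with `0 ≤ p ≤ 1` entrywise, the matrix
`I + A(diag(p) + (I − diag(p))M)` is invertible and `H(p) ≤ 1` entrywise, where
`A = (L* + D)⁻¹ B` and `M = I − F*`. -/
theorem Hmap_le_one
    {n m : ℕ} (hn : 2 ≤ n) (hm : 1 ≤ m)
    (Q : Fin m → Matrix (Fin n) (Fin n) ℝ)
    (hQoff : ∀ (α : Fin m) (i j : Fin n), i ≠ j → 0 ≤ Q α i j)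
    (hQdiag : ∀ (α : Fin m) (i : Fin n), Q α i i = -∑ j ∈ Finset.univ \ {i}, Q α i j)
    (hQirr : ∀ (α : Fin m) (i j : Fin n),
      Relation.ReflTransGen (fun a b => 0 < Q α a b) i j)
    (piv : Fin m → Fin n → ℝ) (hpivpos : ∀ α i, 0 < piv α i)
    (hpiveig : ∀ (α : Fin m) (i : Fin n), ∑ j, Q α j i * piv α j = 0)
    (hpivsum : ∀ α, ∑ i, piv α i = 1)
    (N : Fin m → ℝ) (hN : ∀ α, 0 < N α)
    (β δ : Fin m → Fin n → ℝ)
    (hβ : ∀ α i, 0 < β α i) (hδ : ∀ α i, 0 ≤ δ α i)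
    (hδpos : ∀ α, ∃ k, 0 < δ α k)
    (p : Fin m × Fin n → ℝ) (hp0 : ∀ q, 0 ≤ p q) (hp1 : ∀ q, p q ≤ 1) :
    IsUnit (1 + Amat Q piv β δ * (Matrix.diagonal p
        + (1 - Matrix.diagonal p) * (1 - Fstar N piv))) ∧
      (∀ q, Hmap (Amat Q piv β δ) (1 - Fstar N piv) p q ≤ 1) :=
  Hmap_le_one_general Q hQoff hQdiag hQirr piv hpivpos hpiveig N hN β δ hβ hδ hδpos p hp0 hp1
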